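/- arXiv:2107.04699 — 3 statements merged into one kernel-verified Lean document; each statement's English description precedes it below -/
import Mathlib

section
/- Let Q and Q* be k-path partitions of a directed graph on n vertices, where Q has the minimum number of singletons (1-vertex paths) among all k-path partitions. Then |Q| ≤ (k/2)·|Q*|. -/
def IsKPathPartition {V : Type*} (G : V → V → Prop) (k : ℕ) (Q : List (List V)) : Prop :=
  (∀ p ∈ Q, p ≠ [] ∧ p.Nodup ∧ p.Chain' G ∧ p.length ≤ k) ∧
  Q.flatten.Nodup ∧ ∀ v : V, v ∈ Q.flatten

/-- The number of singletons (order-1 paths) in a partition. -/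
def numSingletons {V : Type*} (Q : List (List V)) : ℕ :=
  (Q.filter (fun p => p.length = 1)).length

/-!
Every path of `Q` has order at least 2 unless it is a singleton, so `2|Q| ≤ s(Q) + n`; every path of
`Q*` has order at most `k`, and a singleton falls `k - 1` short of that, so `n + (k-1)s(Q*) ≤ k|Q*|`.
Since `s(Q) ≤ s(Q*)` by minimality and `k - 1 ≥ 1`, the two bounds chain to `2|Q| ≤ k|Q*|`.
-/

section Singletons

variable {V : Type*}

@[simp]
lemma numSingletons_nil : numSingletons ([] : List (List V)) = 0 := rfl

lemma numSingletons_cons (p : List V) (Q : List (List V)) :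
    numSingletons (p :: Q) = (if p.length = 1 then 1 else 0) + numSingletons Q := by
  unfold numSingletons
  split_ifs with h <;> simp [h, Nat.add_comm]

lemma two_mul_length_le_numSingletons_add_length_flatten {Q : List (List V)}
    (hQ : ∀ p ∈ Q, p ≠ []) : 2 * Q.length ≤ numSingletons Q + Q.flatten.length := by
  induction Q with
  | nil => simp
  | cons p Q ih =>
    have hp : 0 < p.length := List.length_pos_iff.mpr (hQ p List.mem_cons_self)
    have := ih fun q hq => hQ q (List.mem_cons_of_mem p hq)
    rw [numSingletons_cons, List.flatten_cons, List.length_append, List.length_cons]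
    split_ifs <;> omega

lemma length_flatten_add_numSingletons_le {k : ℕ} {Q : List (List V)}
    (hQ : ∀ p ∈ Q, p.length ≤ k) :
    Q.flatten.length + (k - 1) * numSingletons Q ≤ k * Q.length := by
  induction Q with
  | nil => simp
  | cons p Q ih =>
    have hp := hQ p List.mem_cons_self
    have := ih fun q hq => hQ q (List.mem_cons_of_mem p hq)
    rw [numSingletons_cons, List.flatten_cons, List.length_append, List.length_cons]
    split_ifs with h <;> simp only [h, Nat.mul_add, Nat.mul_one, Nat.zero_add] at hp ⊢ <;>
      omega

end Singletons

lemma IsKPathPartition.length_flatten_eq {V : Type*} {G : V → V → Prop} {k : ℕ}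
    {Q Q' : List (List V)} (hQ : IsKPathPartition G k Q) (hQ' : IsKPathPartition G k Q') :
    Q.flatten.length = Q'.flatten.length :=
  ((List.perm_ext_iff_of_nodup hQ.2.1 hQ'.2.1).mpr fun v =>
    iff_of_true (hQ.2.2 v) (hQ'.2.2 v)).length_eq

theorem min_singletons_kPP_ratio_general {V : Type*}
    (G : V → V → Prop) (k : ℕ) (hk : 3 ≤ k) (Q Qstar : List (List V))
    (hQ : IsKPathPartition G k Q) (hQstar : IsKPathPartition G k Qstar)
    (hmin : ∀ Q' : List (List V), IsKPathPartition G k Q' →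
      numSingletons Q ≤ numSingletons Q') :
    (Q.length : ℚ) ≤ (k : ℚ) / 2 * Qstar.length := by
  have hlower := two_mul_length_le_numSingletons_add_length_flatten fun p hp => (hQ.1 p hp).1
  have hupper := length_flatten_add_numSingletons_le fun p hp => (hQstar.1 p hp).2.2.2
  have hsame := hQ.length_flatten_eq hQstar
  have hs := hmin Qstar hQstar
  have hkey : 2 * Q.length ≤ k * Qstar.length := by
    have : numSingletons Qstar ≤ (k - 1) * numSingletons Qstar :=
      Nat.le_mul_of_pos_left _ (by omega)
    omega
  have : (2 * Q.length : ℚ) ≤ k * Qstar.length := by exact_mod_cast hkey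
  linarith

theorem min_singletons_kPP_ratio {V : Type*} [Fintype V] [DecidableEq V]
    (G : V → V → Prop) (k : ℕ) (hk : 3 ≤ k) (Q Qstar : List (List V))
    (hQ : IsKPathPartition G k Q) (hQstar : IsKPathPartition G k Qstar)
    (hmin : ∀ Q' : List (List V), IsKPathPartition G k Q' →
      numSingletons Q ≤ numSingletons Q') :
    (Q.length : ℚ) ≤ (k : ℚ) / 2 * Qstar.length :=
  min_singletons_kPP_ratio_general G k hk Q Qstar hQ hQstar hmin
end

section
/- Let C be a path-cycle cover of a directed graph G and let U₂ ⊆ V(G) be such that no edge of C joins U₂ to its complement and C restricted to the complement of U₂ is a disjoint union of h 2-cycles. If C[U₂] is a maximum path-cycle cover of G[U₂] and Q* is any k-path partition of G such that every edge of Q* has both endpoints in U₂ or both endpoints in one of the h 2-cycles, with exactly one edge of Q* inside each 2-cycle, then |E(C)| ≥ |E(Q*)| + h. -/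
/-! The edges of `Q*` form a path-cycle cover of `G`. Those inside `U₂` form one of `G[U₂]`, so
there are at most `|E(C[U₂])|` of them; every other edge is one orientation of one of the `h`
2-cycles, and each 2-cycle contributes exactly one. Hence
`|E(Q*)| + h ≤ |E(C[U₂])| + 2h = |E(C)|`. -/

/-- A path-cycle cover of `G`: a set of edges of `G` with in-degree and out-degree
at most 1 at every vertex. -/
def IsPathCycleCover {V : Type*} [DecidableEq V] (G : V → V → Prop)
    (M : Finset (V × V)) : Prop :=
  (∀ e ∈ M, G e.1 e.2) ∧
  (∀ v : V, (M.filter (fun e => e.1 = v)).card ≤ 1) ∧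
  (∀ v : V, (M.filter (fun e => e.2 = v)).card ≤ 1)

def numEdges {V : Type*} (Q : List (List V)) : ℕ :=
  (Q.map (fun p => p.length - 1)).sum

namespace List

variable {α : Type*}

theorem mem_consecutivePairs_iff_infix {a b : α} :
    ∀ {l : List α}, (a, b) ∈ l.consecutivePairs ↔ [a, b] <:+: l
  | [] => by simp
  | [x] => iff_of_false (by simp [consecutivePairs]) fun h => by simpa using h.length_le
  | x :: y :: l => by
    rw [infix_cons_iff, ← mem_consecutivePairs_iff_infix (l := y :: l)]
    simp [consecutivePairs, cons_prefix_cons]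

theorem map_fst_consecutivePairs_sublist (l : List α) :
    l.consecutivePairs.map Prod.fst <+ l := by
  rw [consecutivePairs, zip_eq_zip_take_min, map_fst_zip (by simp)]
  exact take_sublist _ _

theorem map_snd_consecutivePairs_sublist (l : List α) :
    l.consecutivePairs.map Prod.snd <+ l := by
  rw [consecutivePairs, map_snd_zip (by simp)]
  exact tail_sublist l

end List

section PathEdges

variable {V : Type*}

def pathEdges (Q : List (List V)) : List (V × V) :=
  Q.flatMap List.consecutivePairs

theorem mem_pathEdges {Q : List (List V)} {e : V × V} :
    e ∈ pathEdges Q ↔ ∃ p ∈ Q, [e.1, e.2] <:+: p := by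
  obtain ⟨u, v⟩ := e
  simp only [pathEdges, List.mem_flatMap, List.mem_consecutivePairs_iff_infix]

theorem length_pathEdges (Q : List (List V)) : (pathEdges Q).length = numEdges Q := by
  simp [pathEdges, numEdges, List.length_flatMap]

theorem map_fst_pathEdges_sublist (Q : List (List V)) :
    ((pathEdges Q).map Prod.fst).Sublist Q.flatten := by
  induction Q with
  | nil => simp [pathEdges]
  | cons p Q ih =>
    simpa [pathEdges] using (List.map_fst_consecutivePairs_sublist p).append ih

theorem map_snd_pathEdges_sublist (Q : List (List V)) :
    ((pathEdges Q).map Prod.snd).Sublist Q.flatten := by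
  induction Q with
  | nil => simp [pathEdges]
  | cons p Q ih =>
    simpa [pathEdges] using (List.map_snd_consecutivePairs_sublist p).append ih

theorem nodup_pathEdges {Q : List (List V)} (hQ : Q.flatten.Nodup) : (pathEdges Q).Nodup :=
  ((map_fst_pathEdges_sublist Q).nodup hQ).of_map _

end PathEdges

section PathCycleCover

variable {V : Type*} [DecidableEq V] {G : V → V → Prop} {M : Finset (V × V)}

theorem IsPathCycleCover.of_injOn (hG : ∀ e ∈ M, G e.1 e.2)
    (hfst : Set.InjOn Prod.fst (M : Set (V × V))) (hsnd : Set.InjOn Prod.snd (M : Set (V × V))) :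
    IsPathCycleCover G M := by
  refine ⟨hG, fun v => Finset.card_le_one.mpr fun a ha b hb => ?_,
    fun v => Finset.card_le_one.mpr fun a ha b hb => ?_⟩
  · rw [Finset.mem_filter] at ha hb
    exact hfst ha.1 hb.1 (ha.2.trans hb.2.symm)
  · rw [Finset.mem_filter] at ha hb
    exact hsnd ha.1 hb.1 (ha.2.trans hb.2.symm)

theorem IsPathCycleCover.restrict (hM : IsPathCycleCover G M) (S : Finset V) :
    IsPathCycleCover (fun u v => G u v ∧ u ∈ S ∧ v ∈ S)
      (M.filter fun e => e.1 ∈ S ∧ e.2 ∈ S) := by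
  have hsub := Finset.filter_subset (fun e : V × V => e.1 ∈ S ∧ e.2 ∈ S) M
  refine ⟨fun e he => ?_, fun v => ?_, fun v => ?_⟩
  · rw [Finset.mem_filter] at he
    exact ⟨hM.1 e he.1, he.2⟩
  · exact (Finset.card_le_card (Finset.filter_subset_filter _ hsub)).trans (hM.2.1 v)
  · exact (Finset.card_le_card (Finset.filter_subset_filter _ hsub)).trans (hM.2.2 v)

theorem isPathCycleCover_pathEdges {Q : List (List V)} (hchain : ∀ p ∈ Q, p.IsChain G)
    (hQ : Q.flatten.Nodup) : IsPathCycleCover G (pathEdges Q).toFinset := by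
  refine .of_injOn (fun ⟨u, v⟩ he => ?_) (fun a ha b hb => ?_) (fun a ha b hb => ?_)
  · obtain ⟨p, hp, huv⟩ := mem_pathEdges.mp (List.mem_toFinset.mp he)
    simpa using (hchain p hp).infix huv
  · simp only [Finset.mem_coe, List.mem_toFinset] at ha hb
    exact List.inj_on_of_nodup_map ((map_fst_pathEdges_sublist Q).nodup hQ) ha hb
  · simp only [Finset.mem_coe, List.mem_toFinset] at ha hb
    exact List.inj_on_of_nodup_map ((map_snd_pathEdges_sublist Q).nodup hQ) ha hb

end PathCycleCover

namespace Finset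

variable {α : Type*} [DecidableEq α] {P : Finset (α × α)}

theorem swap_notMem_of_vertexDisjoint (hloop : ∀ e ∈ P, e.1 ≠ e.2)
    (hdisj : ∀ e ∈ P, ∀ e' ∈ P, e ≠ e' → e.1 ≠ e'.2) : ∀ e ∈ P, e.swap ∉ P := by
  intro e he hswap
  by_cases h : e = e.swap
  · exact hloop e he (congrArg Prod.fst h)
  · exact hdisj e he e.swap hswap h rfl

theorem filter_not_both_mem_eq {U : Finset α} {T : Finset (α × α)}
    (hT : ∀ x ∈ T, (x.1 ∈ U ∧ x.2 ∈ U) ∨ ∃ e ∈ P, x = e ∨ x = e.swap)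
    (hPU : ∀ e ∈ P, e.1 ∉ U ∧ e.2 ∉ U) :
    T.filter (fun x => ¬(x.1 ∈ U ∧ x.2 ∈ U)) = (P ∪ P.image Prod.swap) ∩ T := by
  ext x
  simp only [mem_filter, mem_inter, mem_union, mem_image]
  constructor
  · rintro ⟨hx, hout⟩
    refine ⟨?_, hx⟩
    rcases hT x hx with hin | ⟨e, he, rfl | rfl⟩
    · exact absurd hin hout
    · exact .inl he
    · exact .inr ⟨e, he, rfl⟩
  · rintro ⟨hP | ⟨e, he, rfl⟩, hx⟩
    · exact ⟨hx, fun hin => (hPU x hP).1 hin.1⟩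
    · exact ⟨hx, fun hin => (hPU e he).2 hin.1⟩

variable (hP : ∀ e ∈ P, e.swap ∉ P)
include hP

theorem card_union_image_swap : (P ∪ P.image Prod.swap).card = 2 * P.card := by
  have hdisj : Disjoint P (P.image Prod.swap) := by
    refine disjoint_left.mpr fun e he hswap => ?_
    obtain ⟨e', he', rfl⟩ := mem_image.mp hswap
    exact hP _ he he'
  rw [card_union_of_disjoint hdisj, card_image_of_injective _ Prod.swap_injective]
  omega

theorem pairwiseDisjoint_pair_swap :
    (P : Set (α × α)).PairwiseDisjoint fun e => ({e, e.swap} : Finset (α × α)) := by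
  intro e he e' he' hne
  simp only [Function.onFun, disjoint_insert_left, disjoint_insert_right, mem_insert,
    mem_singleton, disjoint_singleton]
  refine ⟨not_or.mpr ⟨hne.symm, ?_⟩, ?_, fun h => hne (Prod.swap_injective h)⟩
  · rintro rfl
    exact hP e he he'
  · rintro rfl
    exact hP e' he' he

theorem card_union_image_swap_inter {T : Finset (α × α)}
    (hT : ∀ e ∈ P, ∃! x, (x = e ∨ x = e.swap) ∧ x ∈ T) :
    ((P ∪ P.image Prod.swap) ∩ T).card = P.card := by
  have hbiUnion : P ∪ P.image Prod.swap = P.biUnion fun e => {e, e.swap} := by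
    ext x
    simp only [mem_union, mem_image, mem_biUnion, mem_insert, mem_singleton]
    constructor
    · rintro (hx | ⟨e, he, rfl⟩)
      · exact ⟨x, hx, .inl rfl⟩
      · exact ⟨e, he, .inr rfl⟩
    · rintro ⟨e, he, rfl | rfl⟩
      · exact .inl he
      · exact .inr ⟨e, he, rfl⟩
  rw [hbiUnion, biUnion_inter, card_biUnion, card_eq_sum_ones]
  · refine sum_congr rfl fun e he => card_eq_one_iff_existsUnique.mpr ?_
    simpa using hT e he
  · exact (pairwiseDisjoint_pair_swap hP).mono fun e => inter_subset_left

end Finset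

theorem pcc_edges_ge_opt_add_h_general {V : Type*} [DecidableEq V]
    (G : V → V → Prop) (C : Finset (V × V)) (U₂ : Finset V)
    (pairs : Finset (V × V)) (h k : ℕ) (Qstar : List (List V))
    (hcard : pairs.card = h)
    (hpairs : ∀ e ∈ pairs, e.1 ≠ e.2 ∧ e.1 ∉ U₂ ∧ e.2 ∉ U₂)
    (hdisj : ∀ e ∈ pairs, ∀ e' ∈ pairs, e ≠ e' →
      e.1 ≠ e'.1 ∧ e.1 ≠ e'.2 ∧ e.2 ≠ e'.1 ∧ e.2 ≠ e'.2)
    (hCout : C.filter (fun e => e.1 ∉ U₂)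
      = pairs ∪ pairs.image (fun e => (e.2, e.1)))
    (hmaxU2 : ∀ M : Finset (V × V),
      IsPathCycleCover (fun u v => G u v ∧ u ∈ U₂ ∧ v ∈ U₂) M →
      M.card ≤ (C.filter (fun e => e.1 ∈ U₂)).card)
    (hQ : IsKPathPartition G k Qstar)
    (hQedges : ∀ p ∈ Qstar, ∀ u v : V, [u, v] <:+: p →
      (u ∈ U₂ ∧ v ∈ U₂) ∨ ∃ e ∈ pairs, (u = e.1 ∧ v = e.2) ∨ (u = e.2 ∧ v = e.1))
    (hone : ∀ e ∈ pairs, ∃! uv : V × V,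
      (uv = e ∨ uv = (e.2, e.1)) ∧ ∃ p ∈ Qstar, [uv.1, uv.2] <:+: p) :
    numEdges Qstar + h ≤ C.card := by
  set T := (pathEdges Qstar).toFinset
  have hswap : ∀ e ∈ pairs, e.swap ∉ pairs := Finset.swap_notMem_of_vertexDisjoint
    (fun e he => (hpairs e he).1) fun e he e' he' hne => (hdisj e he e' he' hne).2.1
  have hT : T.card = numEdges Qstar := by
    rw [List.toFinset_card_of_nodup (nodup_pathEdges hQ.2.1), length_pathEdges]
  have hinner : (T.filter fun e => e.1 ∈ U₂ ∧ e.2 ∈ U₂).card ≤ (C.filter (·.1 ∈ U₂)).card :=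
    hmaxU2 _ ((isPathCycleCover_pathEdges (fun p hp => (hQ.1 p hp).2.2.1) hQ.2.1).restrict U₂)
  have hcross : T.filter (fun e => ¬(e.1 ∈ U₂ ∧ e.2 ∈ U₂)) =
      (pairs ∪ pairs.image Prod.swap) ∩ T := by
    refine Finset.filter_not_both_mem_eq (fun x hx => ?_) fun e he => (hpairs e he).2
    obtain ⟨p, hp, hinf⟩ := mem_pathEdges.mp (List.mem_toFinset.mp hx)
    simpa [Prod.ext_iff] using hQedges p hp x.1 x.2 hinf
  have hone' : ∀ e ∈ pairs, ∃! x, (x = e ∨ x = e.swap) ∧ x ∈ T := fun e he => by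
    simpa only [T, List.mem_toFinset, mem_pathEdges, Prod.swap] using hone e he
  have hcrossCard : (T.filter fun e => ¬(e.1 ∈ U₂ ∧ e.2 ∈ U₂)).card = h := by
    rw [hcross, Finset.card_union_image_swap_inter hswap hone', hcard]
  have hCcross : (C.filter (·.1 ∉ U₂)).card = 2 * h :=
    hcard ▸ hCout ▸ Finset.card_union_image_swap hswap
  have hTsplit := T.card_filter_add_card_filter_not fun e => e.1 ∈ U₂ ∧ e.2 ∈ U₂
  have hCsplit := C.card_filter_add_card_filter_not (·.1 ∈ U₂)
  omega

/-- Lemma 3 setting: `C` is a path-cycle cover of `G`, no edge of `C` crosses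
between `U₂` and its complement, and `C` restricted to the complement of `U₂`
consists of `h` vertex-disjoint 2-cycles (recorded by `pairs`, one ordered pair
per 2-cycle).  If `C[U₂]` is a maximum path-cycle cover of `G[U₂]` and `Q*` is a
`k`-path partition of `G` each of whose edges lies within `U₂` or within one of
the 2-cycles, with exactly one edge inside each 2-cycle, then
`|E(C)| ≥ |E(Q*)| + h`. -/
theorem pcc_edges_ge_opt_add_h {V : Type*} [Fintype V] [DecidableEq V]
    (G : V → V → Prop) (C : Finset (V × V)) (U₂ : Finset V)
    (pairs : Finset (V × V)) (h k : ℕ) (Qstar : List (List V))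
    (hC : IsPathCycleCover G C)
    (hsep : ∀ e ∈ C, (e.1 ∈ U₂ ↔ e.2 ∈ U₂))
    (hcard : pairs.card = h)
    (hpairs : ∀ e ∈ pairs, e.1 ≠ e.2 ∧ e.1 ∉ U₂ ∧ e.2 ∉ U₂)
    (hdisj : ∀ e ∈ pairs, ∀ e' ∈ pairs, e ≠ e' →
      e.1 ≠ e'.1 ∧ e.1 ≠ e'.2 ∧ e.2 ≠ e'.1 ∧ e.2 ≠ e'.2)
    (hCout : C.filter (fun e => e.1 ∉ U₂)
      = pairs ∪ pairs.image (fun e => (e.2, e.1)))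
    (hcover : ∀ v : V, v ∉ U₂ → ∃ e ∈ pairs, v = e.1 ∨ v = e.2)
    (hmaxU2 : ∀ M : Finset (V × V),
      IsPathCycleCover (fun u v => G u v ∧ u ∈ U₂ ∧ v ∈ U₂) M →
      M.card ≤ (C.filter (fun e => e.1 ∈ U₂)).card)
    (hQ : IsKPathPartition G k Qstar)
    (hQedges : ∀ p ∈ Qstar, ∀ u v : V, [u, v] <:+: p →
      (u ∈ U₂ ∧ v ∈ U₂) ∨ ∃ e ∈ pairs, (u = e.1 ∧ v = e.2) ∨ (u = e.2 ∧ v = e.1))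
    (hone : ∀ e ∈ pairs, ∃! uv : V × V,
      (uv = e ∨ uv = (e.2, e.1)) ∧ ∃ p ∈ Qstar, [uv.1, uv.2] <:+: p) :
    numEdges Qstar + h ≤ C.card :=
  pcc_edges_ge_opt_add_h_general G C U₂ pairs h k Qstar hcard hpairs hdisj hCout hmaxU2 hQ hQedges
    hone
end

section
/- Let G be a directed graph and Q a k-path partition of G. Suppose u is a singleton of Q, (u,v) ∈ E(G), and v is the j-th vertex (j ≠ 2) of an ℓ-path of Q with ℓ ≤ k. Then Q can be transformed into another k-path partition Q' of G with strictly fewer singletons. -/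
section

variable {V : Type*} {G : V → V → Prop} {k : ℕ}

def IsKPath (G : V → V → Prop) (k : ℕ) (p : List V) : Prop :=
  p ≠ [] ∧ p.Nodup ∧ p.IsChain G ∧ p.length ≤ k

namespace IsKPath

theorem of_infix {p q : List V} (hp : IsKPath G k p) (hq : q <:+: p) (hne : q ≠ []) :
    IsKPath G k q :=
  ⟨hne, hp.2.1.sublist hq.sublist, hp.2.2.1.infix hq, hq.length_le.trans hp.2.2.2⟩

theorem take {p : List V} (hp : IsKPath G k p) {i : ℕ} (hi : 0 < i) : IsKPath G k (p.take i) :=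
  hp.of_infix (List.take_prefix i p).isInfix (by simpa [hi.ne'] using hp.1)

theorem drop {p : List V} (hp : IsKPath G k p) {i : ℕ} (hi : i < p.length) :
    IsKPath G k (p.drop i) :=
  hp.of_infix (List.drop_suffix i p).isInfix (by simpa using hi)

theorem cons {p : List V} (hp : IsKPath G k p) {u v : V} (hu : u ∉ p) (hv : p.head? = some v)
    (huv : G u v) (hlen : p.length < k) : IsKPath G k (u :: p) :=
  ⟨List.cons_ne_nil _ _, List.nodup_cons.2 ⟨hu, hp.2.1⟩,
    List.isChain_cons.2 ⟨by simpa [hv] using huv, hp.2.2.1⟩, hlen⟩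

end IsKPath

theorem List.exists_perm_cons_cons {α : Type*} {l : List α} {a b : α} (ha : a ∈ l) (hb : b ∈ l)
    (hba : b ≠ a) : ∃ r, l.Perm (a :: b :: r) := by
  classical
  exact ⟨(l.erase a).erase b, (List.perm_cons_erase ha).trans
    ((List.perm_cons_erase ((List.mem_erase_of_ne hba).2 hb)).cons a)⟩

theorem numSingletons_append (Q Q' : List (List V)) :
    numSingletons (Q ++ Q') = numSingletons Q + numSingletons Q' := by
  simp [numSingletons, List.filter_append]

theorem List.Perm.numSingletons_eq {Q Q' : List (List V)} (h : Q.Perm Q') :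
    numSingletons Q = numSingletons Q' :=
  (h.filter _).length_eq

namespace IsKPathPartition

variable {Q : List (List V)} {p : List V} {u : V}

theorem isKPath (hQ : IsKPathPartition G k Q) (hp : p ∈ Q) : IsKPath G k p :=
  hQ.1 p hp

theorem not_mem_of_singleton_mem (hQ : IsKPathPartition G k Q) (hu : [u] ∈ Q) (hp : p ∈ Q)
    (hne : p ≠ [u]) : u ∉ p := by
  obtain ⟨R, hQR⟩ := List.exists_perm_cons_cons hu hp hne
  have hnd := hQR.flatten.nodup_iff.1 hQ.2.1
  simp only [List.flatten_cons, List.singleton_append, List.nodup_cons, List.mem_append] at hnd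
  exact fun h => hnd.1 (Or.inl h)

theorem exists_fewer_singletons_of_replace (hQ : IsKPathPartition G k Q) (hu : [u] ∈ Q)
    (hp : p ∈ Q) (hup : u ∉ p) (pieces : List (List V)) (hperm : pieces.flatten.Perm (u :: p))
    (hpaths : ∀ q ∈ pieces, IsKPath G k q) (hlen : ∀ q ∈ pieces, q.length ≠ 1) :
    ∃ Q' : List (List V), IsKPathPartition G k Q' ∧ numSingletons Q' < numSingletons Q := by
  obtain ⟨R, hQR⟩ := List.exists_perm_cons_cons hu hp (by rintro rfl; simp at hup)
  have hflat : (pieces ++ R).flatten.Perm Q.flatten := by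
    simpa using (hperm.append_right R.flatten).trans hQR.flatten.symm
  have hpieces : numSingletons pieces = 0 := by
    simpa [numSingletons, List.filter_eq_nil_iff] using hlen
  refine ⟨pieces ++ R, ⟨fun q hq => ?_, hflat.nodup_iff.2 hQ.2.1,
    fun w => hflat.mem_iff.2 (hQ.2.2 w)⟩, ?_⟩
  · rcases List.mem_append.1 hq with hq | hq
    · exact hpaths q hq
    · exact hQ.isKPath (hQR.mem_iff.2 (by simp [hq]))
  · rw [numSingletons_append, hpieces, hQR.numSingletons_eq]
    by_cases h : p.length = 1 <;> simp [numSingletons, h]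

theorem exists_fewer_singletons_of_length_lt (hQ : IsKPathPartition G k Q) (hu : [u] ∈ Q)
    (hp : p ∈ Q) (hup : u ∉ p) {v : V} (huv : G u v) (hv : p.head? = some v)
    (hlen : p.length < k) :
    ∃ Q' : List (List V), IsKPathPartition G k Q' ∧ numSingletons Q' < numSingletons Q :=
  hQ.exists_fewer_singletons_of_replace hu hp hup [u :: p] (by simp)
    (by simpa using (hQ.isKPath hp).cons hup hv huv hlen) (by simpa using (hQ.isKPath hp).1)

theorem exists_fewer_singletons_of_le_length (hk : 3 ≤ k) (hQ : IsKPathPartition G k Q)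
    (hu : [u] ∈ Q) {v : V} {t : List V} (hp : v :: t ∈ Q) (hup : u ∉ v :: t) (huv : G u v)
    (hlen : k ≤ t.length + 1) :
    ∃ Q' : List (List V), IsKPathPartition G k Q' ∧ numSingletons Q' < numSingletons Q := by
  have hpath := hQ.isKPath hp
  have hpair : IsKPath G k [u, v] :=
    (hpath.take one_pos).cons (fun h => hup (List.mem_of_mem_take h)) rfl huv
      ((List.length_take_le 1 _).trans_lt (by omega))
  have htail : IsKPath G k t := by
    simpa using hpath.drop (i := 1) (by simp only [List.length_cons]; omega)
  refine hQ.exists_fewer_singletons_of_replace hu hp hup [[u, v], t] (by simp)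
    (by simpa using ⟨hpair, htail⟩) ?_
  simp only [List.mem_cons, List.not_mem_nil, or_false, forall_eq_or_imp, forall_eq,
    List.length_cons]
  omega

theorem exists_fewer_singletons_of_two_le (hQ : IsKPathPartition G k Q) (hu : [u] ∈ Q)
    (hp : p ∈ Q) (hup : u ∉ p) {v : V} (huv : G u v) {i : ℕ} (hi : 2 ≤ i) (hv : p[i]? = some v) :
    ∃ Q' : List (List V), IsKPathPartition G k Q' ∧ numSingletons Q' < numSingletons Q := by
  have hpath := hQ.isKPath hp
  have hik : i < p.length := (List.getElem?_eq_some_iff.1 hv).1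
  have hdrop : IsKPath G k (u :: p.drop i) :=
    (hpath.drop hik).cons (fun h => hup (List.mem_of_mem_drop h)) (by rwa [List.head?_drop]) huv
      (by rw [List.length_drop]; have := hpath.2.2.2; omega)
  refine hQ.exists_fewer_singletons_of_replace hu hp hup [p.take i, u :: p.drop i]
    (by simpa using List.perm_middle.trans (by rw [List.take_append_drop]))
    (by simpa using ⟨hpath.take (by omega), hdrop⟩) ?_
  simp only [List.mem_cons, List.not_mem_nil, or_false, forall_eq_or_imp, forall_eq,
    List.length_take, List.length_cons, List.length_drop]
  omega

end IsKPathPartition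

end

theorem reduce_singletons_general {V : Type*}
    (G : V → V → Prop) (hirr : ∀ w, ¬ G w w)
    (k : ℕ) (hk : 3 ≤ k) (Q : List (List V)) (hQ : IsKPathPartition G k Q)
    (u v : V) (hu : [u] ∈ Q) (huv : G u v)
    (p : List V) (j : ℕ) (hp : p ∈ Q)
    (hj2 : j ≠ 2)
    (hv : p[j - 1]? = some v) :
    ∃ Q' : List (List V), IsKPathPartition G k Q' ∧
      numSingletons Q' < numSingletons Q := by
  obtain ⟨i, hi1, hv⟩ : ∃ i, i ≠ 1 ∧ p[i]? = some v := ⟨j - 1, by omega, hv⟩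
  have hup : u ∉ p := by
    refine hQ.not_mem_of_singleton_mem hu hp ?_
    rintro rfl
    exact hirr u (by simpa [List.mem_singleton.1 (List.mem_of_getElem? hv)] using huv)
  rcases Nat.lt_or_ge i 2 with hi | hi
  · obtain rfl : i = 0 := by omega
    obtain ⟨t, rfl⟩ : ∃ t, p = v :: t :=
      ⟨p.tail, List.eq_cons_of_mem_head? (List.head?_eq_getElem? ▸ hv)⟩
    by_cases hlen : t.length + 1 < k
    · exact hQ.exists_fewer_singletons_of_length_lt hu hp hup huv rfl hlen
    · exact hQ.exists_fewer_singletons_of_le_length hk hu hp hup huv (by omega)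
  · exact hQ.exists_fewer_singletons_of_two_le hu hp hup huv hi hv

/-- If `u` is a singleton of a `k`-path partition `Q`, `(u,v)` is an edge of `G`,
and `v` is the `j`-th vertex (`j ≠ 2`, 1-indexed) of an `ℓ`-path of `Q`
(`ℓ ≤ k`), then `Q` can be transformed into a `k`-path partition with strictly
fewer singletons. -/
theorem reduce_singletons {V : Type*} [Fintype V] [DecidableEq V]
    (G : V → V → Prop) (hirr : ∀ w, ¬ G w w)
    (k : ℕ) (hk : 3 ≤ k) (Q : List (List V)) (hQ : IsKPathPartition G k Q)
    (u v : V) (hu : [u] ∈ Q) (huv : G u v)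
    (p : List V) (ℓ j : ℕ) (hp : p ∈ Q) (hpl : p.length = ℓ) (hℓk : ℓ ≤ k)
    (hj1 : 1 ≤ j) (hj2 : j ≠ 2) (hjℓ : j ≤ ℓ)
    (hv : p[j - 1]? = some v) :
    ∃ Q' : List (List V), IsKPathPartition G k Q' ∧
      numSingletons Q' < numSingletons Q :=
  reduce_singletons_general G hirr k hk Q hQ u v hu huv p j hp hj2 hv
end
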